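/- arXiv:0810.5522 — 2 statements merged into one kernel-verified Lean document; each statement's English description precedes it below -/
import Mathlib

section
/- Let G be a finite simple graph with adjacency matrix A(G) over Z_2, and let G~ be the graph obtained from G by adding two new vertices u and v that are not adjacent to each other but have identical neighborhoods in G (i.e., both u and v are adjacent exactly to the vertices of some fixed subset of V(G)). Then for every subset s of V(G): corank A(G~(s)) = corank A(G(s)), and corank A(G~(s ∪ {u})) = corank A(G~(s ∪ {v})) = corank A(G~(s ∪ {u,v})) − 1, where G(s) denotes the induced subgraph on s and corank is taken over Z_2. -/
open Matrix LaurentPolynomial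
open scoped Classical

noncomputable section

def adjMatS {V : Type} (G : SimpleGraph V) (s : Finset V) : Matrix s s (ZMod 2) :=
  fun i j => if G.Adj i.1 j.1 then 1 else 0

def corankS {V : Type} (G : SimpleGraph V) (s : Finset V) : ℕ :=
  s.card - (adjMatS G s).rank

def adjMat {V : Type} [Fintype V] (G : SimpleGraph V) : Matrix V V (ZMod 2) :=
  fun i j => if G.Adj i j then 1 else 0

def corankM {m : Type} [Fintype m] (M : Matrix m m (ZMod 2)) : ℕ :=
  Fintype.card m - M.rank

def alphaCount {V : Type} [Fintype V] (σ : V → Bool) (s : Finset V) : ℕ :=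
  (s.filter (fun i => σ i = false)).card + ((sᶜ).filter (fun i => σ i = true)).card

def bracket {V : Type} [Fintype V] (G : SimpleGraph V) (σ : V → Bool) : LaurentPolynomial ℚ :=
  ∑ s : Finset V, T (2 * (alphaCount σ s : ℤ) - (Fintype.card V : ℤ)) *
    (-T 2 - T (-2)) ^ (corankS G s)

def lspan (p : LaurentPolynomial ℚ) : ℤ := (p.coeff.support.max.unbotD 0) - (p.coeff.support.min.untopD 0)

def Bmat {V : Type} [Fintype V] (G : SimpleGraph V) (x : V) : Matrix V V (ZMod 2) :=
  adjMat G + 1 + Matrix.single x x 1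

def writhe {V : Type} [Fintype V] (G : SimpleGraph V) (σ : V → Bool) : ℤ :=
  ∑ x, (-1 : ℤ) ^ (corankM (Bmat G x)) * (if σ x then 1 else -1)

def extAdj {V : Type} (G : SimpleGraph V) (N : Set V) : V ⊕ Bool → V ⊕ Bool → Prop
  | .inl i, .inl j => G.Adj i j
  | .inl i, .inr _ => i ∈ N
  | .inr _, .inl j => j ∈ N
  | .inr _, .inr _ => False

def ext2 {V : Type} (G : SimpleGraph V) (N : Set V) : SimpleGraph (V ⊕ Bool) where
  Adj := extAdj G N
  symm := by
    constructor
    rintro (i|b) (j|c) h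
    · exact G.adj_symm h
    · exact h
    · exact h
    · exact h
  loopless := by
    constructor
    rintro (i|b) h
    · exact G.irrefl h
    · exact h

def optExt {V : Type} (G : SimpleGraph V) : SimpleGraph (Option V) where
  Adj x y := match x, y with
    | some i, some j => G.Adj i j
    | _, _ => False
  symm := by
    constructor
    rintro (_|i) (_|j) h
    · exact h
    · exact h
    · exact h
    · exact G.adj_symm h
  loopless := by
    constructor
    rintro (_|i) h
    · exact h
    · exact G.irrefl h

/-! The rank of a matrix is unchanged when its rows and columns are reindexed along surjections.
Reindexing along bijections gives the first two identities: `G` embeds in `G~` via `inl`, and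
swapping `u` and `v` is an automorphism of `G~`. Since `u` and `v` are non-adjacent twins, the
adjacency matrix of `G~(s ∪ {u, v})` is that of `G~(s ∪ {u})` with the row and column of `u`
repeated, so the rank stays the same while the size grows by one. -/

theorem Matrix.rank_submatrix_of_surjective {R m n m₀ n₀ : Type*} [CommSemiring R]
    [StrongRankCondition R] [Fintype n] [Fintype n₀] (A : Matrix m n R) {r : m₀ → m}
    {c : n₀ → n} (hr : Function.Surjective r) (hc : Function.Surjective c) :
    (A.submatrix r c).rank = A.rank := by
  refine (rank_submatrix_le A r c).antisymm ?_
  have hA : (A.submatrix r c).submatrix (Function.surjInv hr) (Function.surjInv hc) = A := by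
    ext i j
    simp only [submatrix_apply, Function.surjInv_eq]
  simpa only [hA] using
    rank_submatrix_le (A.submatrix r c) (Function.surjInv hr) (Function.surjInv hc)

section Corank

variable {V W : Type} {G : SimpleGraph V} {H : SimpleGraph W} {s : Finset V} {t : Finset W}

theorem adjMatS_rank_eq_of_surjective {f : s → t} (hf : Function.Surjective f)
    (hadj : ∀ i j, H.Adj (f i) (f j) ↔ G.Adj i j) :
    (adjMatS G s).rank = (adjMatS H t).rank := by
  have hmat : adjMatS G s = (adjMatS H t).submatrix f f := by
    ext i j
    simp only [adjMatS, submatrix_apply, hadj]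
  rw [hmat, rank_submatrix_of_surjective _ hf hf]

theorem corankS_eq_of_equiv (e : s ≃ t) (hadj : ∀ i j, H.Adj (e i) (e j) ↔ G.Adj i j) :
    corankS H t = corankS G s := by
  rw [corankS, corankS, Finset.card_eq_of_equiv e,
    adjMatS_rank_eq_of_surjective e.surjective hadj]

theorem corankS_map (f : G ↪g H) (s : Finset V) :
    corankS H (s.map f.toEmbedding) = corankS G s :=
  corankS_eq_of_equiv (s.equivMap f.toEmbedding) fun _ _ => f.map_adj_iff

theorem corankS_insert_of_twin [DecidableEq V] {u v : V} (hu : u ∈ s) (hv : v ∉ s)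
    (htwin : ∀ w ∈ s, G.Adj v w ↔ G.Adj u w) :
    corankS G (insert v s) = corankS G s + 1 := by
  let f : ↥(insert v s) → s := fun x =>
    if hx : x.1 = v then ⟨u, hu⟩ else ⟨x.1, (Finset.mem_insert.mp x.2).resolve_left hx⟩
  have hf_val (x : ↥(insert v s)) : (f x).1 = if x.1 = v then u else x.1 := by
    by_cases hx : x.1 = v <;> simp [f, hx]
  have hf : Function.Surjective f := fun y =>
    ⟨⟨y.1, Finset.mem_insert_of_mem y.2⟩,
      Subtype.ext (by simp [hf_val, ne_of_mem_of_not_mem y.2 hv])⟩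
  have hadj : ∀ i j, G.Adj (f i) (f j) ↔ G.Adj i j := by
    intro ⟨i, hi⟩ ⟨j, hj⟩
    rw [hf_val, hf_val]
    rcases Finset.mem_insert.mp hi with rfl | hi' <;> rcases Finset.mem_insert.mp hj with rfl | hj'
    · simp
    · simp [ne_of_mem_of_not_mem hj' hv, htwin j hj']
    · simp [ne_of_mem_of_not_mem hi' hv, G.adj_comm i, htwin i hi']
    · simp [ne_of_mem_of_not_mem hi' hv, ne_of_mem_of_not_mem hj' hv]
  have hrank : (adjMatS G s).rank ≤ s.card := by
    simpa using rank_le_card_width (adjMatS G s)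
  rw [corankS, corankS, adjMatS_rank_eq_of_surjective hf hadj, Finset.card_insert_of_notMem hv]
  omega

end Corank

namespace ext2

variable {V : Type} (G : SimpleGraph V) (N : Set V)

def inlEmbedding : G ↪g ext2 G N where
  toEmbedding := .inl
  map_rel_iff' := Iff.rfl

def swapTwins : ext2 G N ≃g ext2 G N where
  toEquiv := Equiv.sumCongr (Equiv.refl V) Equiv.boolNot
  map_rel_iff' := by rintro (a | a) (b | b) <;> exact Iff.rfl

end ext2

theorem corank_ext2_general {V : Type} (G : SimpleGraph V) (N : Set V)
    (s : Finset V) :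
    corankS (ext2 G N) (s.image Sum.inl) = corankS G s ∧
    corankS (ext2 G N) (insert (Sum.inr true) (s.image Sum.inl)) =
      corankS (ext2 G N) (insert (Sum.inr false) (s.image Sum.inl)) ∧
    corankS (ext2 G N) (insert (Sum.inr true) (insert (Sum.inr false) (s.image Sum.inl))) =
      corankS (ext2 G N) (insert (Sum.inr true) (s.image Sum.inl)) + 1 := by
  have hinl : s.image Sum.inl = s.map (ext2.inlEmbedding G N).toEmbedding := by
    rw [Finset.map_eq_image]; rfl
  have hswap : (insert (Sum.inr false) (s.image Sum.inl)).map
      (ext2.swapTwins G N).toEmbedding.toEmbedding = insert (Sum.inr true) (s.image Sum.inl) := by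
    ext (a | b) <;> simp [ext2.swapTwins]
  have hnotMem : (Sum.inr false : V ⊕ Bool) ∉ insert (Sum.inr true) (s.image Sum.inl) := by simp
  refine ⟨hinl ▸ corankS_map _ s, ?_, ?_⟩
  · rw [← hswap]
    exact corankS_map (ext2.swapTwins G N).toEmbedding _
  · rw [Finset.insert_comm]
    exact corankS_insert_of_twin (G := ext2 G N) (Finset.mem_insert_self _ _) hnotMem
      fun w _ => by rcases w with a | b <;> exact Iff.rfl

/-- Ω_g2 extension: coranks of induced subgraphs. -/
theorem corank_ext2 {V : Type} [Fintype V] (G : SimpleGraph V) (N : Set V)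
    (s : Finset V) :
    corankS (ext2 G N) (s.image Sum.inl) = corankS G s ∧
    corankS (ext2 G N) (insert (Sum.inr true) (s.image Sum.inl)) =
      corankS (ext2 G N) (insert (Sum.inr false) (s.image Sum.inl)) ∧
    corankS (ext2 G N) (insert (Sum.inr true) (insert (Sum.inr false) (s.image Sum.inl))) =
      corankS (ext2 G N) (insert (Sum.inr true) (s.image Sum.inl)) + 1 :=
  corank_ext2_general G N s
end
end

section
/- Let D be a chord diagram and G its intersection graph with adjacency matrix A(G) over Z_2. Then the number of connected components of the one-manifold m(D) obtained by surgery on the circle along all chords of D equals corank A(G) + 1. -/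
/-!
Number the endpoints of the chords by the circle `ZMod (2n)`. A function `t` on the circle is
constant on the components of `m(D)` iff `t p = t (τ (p + 1))` for all `p`, so over `ZMod 2` the
number of components is the dimension of the space of such invariant functions. An invariant `t`
jumps only at endpoints, and by the same amount at both ends of a chord; hence
`t = c + ∑ j, δ j * χ j` with `χ j` the indicator of the arc spanned by chord `j`. At an
endpoint of chord `i` the invariance condition then reads `∑ {j linked to i}, δ j = 0`, so
`(δ, c)` ranges injectively over `ker A × ZMod 2`.
-/

open Matrix LaurentPolynomial
open scoped Classical

noncomputable section

/-- Two chords are linked iff their endpoints interleave on the circle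
`ZMod (2n)` (endpoints compared via their values in {0, …, 2n-1}). -/
def linked {n : ℕ} (f : Fin n → ZMod (2 * n) × ZMod (2 * n)) (i j : Fin n) : Prop :=
  ((f i).1.val < (f j).1.val ∧ (f j).1.val < (f i).2.val ∧ (f i).2.val < (f j).2.val) ∨
  ((f j).1.val < (f i).1.val ∧ (f i).1.val < (f j).2.val ∧ (f j).2.val < (f i).2.val)

theorem ZMod.val_sub_one {m : ℕ} [NeZero m] (q : ZMod m) :
    (q - 1).val = if q.val = 0 then m - 1 else q.val - 1 := by
  obtain ⟨k, rfl⟩ := Nat.exists_eq_succ_of_ne_zero (NeZero.ne m)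
  have := q.val_lt
  rw [sub_eq_add_neg, ZMod.val_add, ZMod.val_neg_one]
  split_ifs with h
  · simp [h]
  · rw [show q.val + k = (q.val - 1) + (k + 1) by omega, Nat.add_mod_right,
      Nat.mod_eq_of_lt (by omega)]

theorem ZMod.apply_eq_apply_zero_of_forall_add_one {m : ℕ} [NeZero m] {α : Type*}
    {g : ZMod m → α} (h : ∀ q, g (q + 1) = g q) (q : ZMod m) : g q = g 0 := by
  rw [← ZMod.natCast_zmod_val q]
  induction q.val with
  | zero => simp
  | succ k ih => rw [Nat.cast_succ, h, ih]

theorem LinearMap.mem_range_funLeft_quotMk_iff {X K : Type*} [CommSemiring K]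
    {r : X → X → Prop} {t : X → K} :
    t ∈ range (funLeft K K (Quot.mk r)) ↔ ∀ p q, r p q → t p = t q := by
  refine ⟨?_, fun h => ⟨Quot.lift t h, rfl⟩⟩
  rintro ⟨F, rfl⟩ p q hpq
  exact congrArg F (Quot.sound hpq)

theorem LinearMap.finrank_range_funLeft_quotMk {X K : Type*} [Finite X] [Field K]
    (r : X → X → Prop) :
    Module.finrank K (range (funLeft K K (Quot.mk r))) = Nat.card (Quot r) := by
  have : Fintype (Quot r) := Fintype.ofFinite _
  rw [finrank_range_of_inj (funLeft_injective_of_surjective _ _ _ Quot.mk_surjective),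
    Module.finrank_fintype_fun_eq_card, Nat.card_eq_fintype_card]

theorem Matrix.finrank_ker_mulVecLin_comp_fst_add_rank {m l K : Type*} [Fintype m] [Fintype l]
    [Field K] (M : Matrix m l K) :
    Module.finrank K (LinearMap.ker (M.mulVecLin ∘ₗ LinearMap.fst K (l → K) K)) + M.rank =
      Fintype.card l + 1 := by
  have h := LinearMap.finrank_range_add_finrank_ker (M.mulVecLin ∘ₗ LinearMap.fst K (l → K) K)
  rw [LinearMap.range_comp_of_range_eq_top _ (Submodule.range_fst), Module.finrank_prod,
    Module.finrank_fintype_fun_eq_card, Module.finrank_self] at h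
  rw [Matrix.rank]
  omega

namespace ChordDiagram

variable {n : ℕ} (f : Fin n → ZMod (2 * n) × ZMod (2 * n))

def endpoint (p : Fin n × Bool) : ZMod (2 * n) := cond p.2 (f p.1).2 (f p.1).1

def linkingMatrix : Matrix (Fin n) (Fin n) (ZMod 2) :=
  Matrix.of fun i j => if linked f i j then 1 else 0

def arcIndicator (j : Fin n) (q : ZMod (2 * n)) : ZMod 2 :=
  if (f j).1.val ≤ q.val ∧ q.val < (f j).2.val then 1 else 0

def arcSum : (Fin n → ZMod 2) × ZMod 2 →ₗ[ZMod 2] ZMod (2 * n) → ZMod 2 where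
  toFun x q := x.2 + ∑ j, x.1 j * arcIndicator f j q
  map_add' x y := by
    funext q
    simp only [Prod.fst_add, Prod.snd_add, Pi.add_apply, add_mul, Finset.sum_add_distrib]
    ring
  map_smul' c x := by
    funext q
    simp only [Prod.smul_fst, Prod.smul_snd, Pi.smul_apply, smul_eq_mul, RingHom.id_apply,
      mul_assoc, ← Finset.mul_sum, mul_add]

variable {f}

theorem arcSum_apply (x : (Fin n → ZMod 2) × ZMod 2) (q : ZMod (2 * n)) :
    arcSum f x q = x.2 + ∑ j, x.1 j * arcIndicator f j q :=
  rfl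

theorem endpoint_surjective [NeZero n] (hinj : Function.Injective (endpoint f)) :
    Function.Surjective (endpoint f) :=
  ((Fintype.bijective_iff_injective_and_card _).mpr
    ⟨hinj, by simp [mul_comm]⟩).surjective

theorem sum_ite_endpoint_eq (hinj : Function.Injective (endpoint f)) (δ : Fin n → ZMod 2)
    (e : Fin n × Bool) :
    ∑ p, (if endpoint f p = endpoint f e then δ p.1 else 0) = δ e.1 := by
  simp only [hinj.eq_iff, Finset.sum_ite_eq', Finset.mem_univ, if_true]

theorem tau_endpoint {τ : ZMod (2 * n) → ZMod (2 * n)} (hτinv : Function.Involutive τ)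
    (hτ : ∀ i, τ (f i).1 = (f i).2) (e : Fin n × Bool) :
    τ (endpoint f e) = endpoint f (e.1, !e.2) := by
  obtain ⟨i, _ | _⟩ := e
  · exact hτ i
  · exact (congrArg τ (hτ i)).symm.trans (hτinv _)

theorem arcIndicator_sub_one [NeZero n] (j : Fin n) (q : ZMod (2 * n)) :
    arcIndicator f j (q - 1) =
      if (f j).1.val < q.val ∧ q.val ≤ (f j).2.val then 1 else 0 := by
  have := (f j).2.val_lt
  unfold arcIndicator
  rw [ZMod.val_sub_one]
  split_ifs <;> first | rfl | omega

theorem arcIndicator_add_arcIndicator_sub_one [NeZero n] (j : Fin n)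
    (hj : (f j).1.val < (f j).2.val) (q : ZMod (2 * n)) :
    arcIndicator f j q + arcIndicator f j (q - 1) =
      ∑ s : Bool, if endpoint f (j, s) = q then 1 else 0 := by
  simp only [Fintype.sum_bool, endpoint, cond_true, cond_false, arcIndicator_sub_one,
    ← ZMod.val_injective _ |>.eq_iff]
  unfold arcIndicator
  split_ifs <;> first | rfl | omega

theorem arcSum_add_arcSum (x : (Fin n → ZMod 2) × ZMod 2) (q q' : ZMod (2 * n)) :
    arcSum f x q + arcSum f x q' = ∑ j, x.1 j * (arcIndicator f j q + arcIndicator f j q') := by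
  simp only [arcSum_apply, mul_add, Finset.sum_add_distrib]
  linear_combination CharTwo.add_self_eq_zero x.2

theorem arcSum_add_arcSum_sub_one [NeZero n] (hlt : ∀ i, (f i).1.val < (f i).2.val)
    (x : (Fin n → ZMod 2) × ZMod 2) (q : ZMod (2 * n)) :
    arcSum f x q + arcSum f x (q - 1) = ∑ p, if endpoint f p = q then x.1 p.1 else 0 := by
  simp only [arcSum_add_arcSum, arcIndicator_add_arcIndicator_sub_one _ (hlt _), Finset.mul_sum,
    mul_ite, mul_one, mul_zero, Fintype.sum_prod_type]

theorem arcSum_injective [NeZero n] (hlt : ∀ i, (f i).1.val < (f i).2.val)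
    (hinj : Function.Injective (endpoint f)) : Function.Injective (arcSum f) := by
  refine (injective_iff_map_eq_zero _).mpr fun x hx => ?_
  have hδ : x.1 = 0 := funext fun i => by
    simpa [hx, sum_ite_endpoint_eq hinj] using
      (arcSum_add_arcSum_sub_one hlt x (endpoint f (i, false))).symm
  have hc : x.2 = 0 := by simpa [arcSum, hδ] using congrFun hx 0
  exact Prod.ext hδ hc

theorem arcIndicator_flip_add_sub_one [NeZero n] (hlt : ∀ i, (f i).1.val < (f i).2.val)
    (hinj : Function.Injective (endpoint f)) (e : Fin n × Bool) (j : Fin n) :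
    arcIndicator f j (endpoint f (e.1, !e.2)) + arcIndicator f j (endpoint f e - 1) =
      if linked f e.1 j then 1 else 0 := by
  obtain ⟨i, s⟩ := e
  have hi := hlt i
  have hj := hlt j
  have hne : i ≠ j → ∀ s s', (endpoint f (i, s)).val ≠ (endpoint f (j, s')).val :=
    fun hij s s' h => hij (congrArg Prod.fst (hinj (ZMod.val_injective _ h)))
  simp only [endpoint, Bool.forall_bool, cond_true, cond_false] at hne
  -- Both sides depend only on the relative order of the endpoints of chords `i` and `j`.
  by_cases hl : linked f i j <;> simp only [hl, if_true, if_false] <;> unfold linked at hl <;>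
    (by_cases hij : i = j <;> [subst hij; specialize hne hij]) <;>
    cases s <;> simp only [endpoint, Bool.not_false, Bool.not_true, cond_true, cond_false] <;>
    rw [arcIndicator_sub_one] <;> unfold arcIndicator <;> split_ifs <;> first | decide | omega

theorem arcSum_flip_add_sub_one [NeZero n] (hlt : ∀ i, (f i).1.val < (f i).2.val)
    (hinj : Function.Injective (endpoint f)) (x : (Fin n → ZMod 2) × ZMod 2)
    (e : Fin n × Bool) :
    arcSum f x (endpoint f (e.1, !e.2)) + arcSum f x (endpoint f e - 1) =
      (linkingMatrix f *ᵥ x.1) e.1 := by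
  simp only [arcSum_add_arcSum, arcIndicator_flip_add_sub_one hlt hinj, Matrix.mulVec,
    dotProduct, linkingMatrix, Matrix.of_apply, mul_comm (x.1 _)]

theorem exists_arcSum_eq [NeZero n] (hlt : ∀ i, (f i).1.val < (f i).2.val)
    (hinj : Function.Injective (endpoint f)) (t : ZMod (2 * n) → ZMod 2)
    (ht : ∀ i, t (f i).2 + t ((f i).2 - 1) = t (f i).1 + t ((f i).1 - 1)) :
    ∃ x, arcSum f x = t := by
  set δ : Fin n → ZMod 2 := fun i => t (f i).1 + t ((f i).1 - 1)
  have hjump : ∀ q, t q - t (q - 1) = arcSum f (δ, 0) q - arcSum f (δ, 0) (q - 1) := by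
    intro q
    obtain ⟨e, rfl⟩ := endpoint_surjective hinj q
    simp only [CharTwo.sub_eq_add, arcSum_add_arcSum_sub_one hlt, sum_ite_endpoint_eq hinj]
    obtain ⟨i, _ | _⟩ := e
    · rfl
    · exact ht i
  have hconst : ∀ q, t q - arcSum f (δ, 0) q = t 0 - arcSum f (δ, 0) 0 :=
    ZMod.apply_eq_apply_zero_of_forall_add_one fun q => by
      have h := hjump (q + 1)
      rw [add_sub_cancel_right] at h
      linear_combination h
  refine ⟨(δ, t 0 - arcSum f (δ, 0) 0), funext fun q => ?_⟩
  have h := hconst q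
  simp only [arcSum_apply, zero_add] at h ⊢
  linear_combination -h

theorem forall_eq_tau_add_one_iff [NeZero n] {K : Type*} {τ : ZMod (2 * n) → ZMod (2 * n)}
    (hinj : Function.Injective (endpoint f)) (hτinv : Function.Involutive τ)
    (hτ : ∀ i, τ (f i).1 = (f i).2) (t : ZMod (2 * n) → K) :
    (∀ p, t p = t (τ (p + 1))) ↔ ∀ e, t (endpoint f (e.1, !e.2)) = t (endpoint f e - 1) := by
  refine ⟨fun h e => ?_, fun h p => ?_⟩
  · rw [h (endpoint f e - 1), sub_add_cancel, tau_endpoint hτinv hτ]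
  · obtain ⟨e, he⟩ := endpoint_surjective hinj (p + 1)
    rw [eq_sub_of_add_eq he.symm, sub_add_cancel, tau_endpoint hτinv hτ]
    exact (h e).symm

theorem forall_eq_tau_add_one_iff_exists_arcSum [NeZero n] {τ : ZMod (2 * n) → ZMod (2 * n)}
    (hlt : ∀ i, (f i).1.val < (f i).2.val) (hinj : Function.Injective (endpoint f))
    (hτinv : Function.Involutive τ) (hτ : ∀ i, τ (f i).1 = (f i).2)
    (t : ZMod (2 * n) → ZMod 2) :
    (∀ p, t p = t (τ (p + 1))) ↔ ∃ x, linkingMatrix f *ᵥ x.1 = 0 ∧ arcSum f x = t := by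
  rw [forall_eq_tau_add_one_iff hinj hτinv hτ]
  refine ⟨fun h => ?_, ?_⟩
  · obtain ⟨x, rfl⟩ := exists_arcSum_eq hlt hinj t fun i => by
      have hb : t (f i).2 = t ((f i).1 - 1) := h (i, false)
      have ha : t (f i).1 = t ((f i).2 - 1) := h (i, true)
      rw [hb, ← ha, add_comm]
    refine ⟨x, funext fun i => ?_, rfl⟩
    rw [← arcSum_flip_add_sub_one hlt hinj x (i, false), h (i, false), CharTwo.add_self_eq_zero]
    rfl
  · rintro ⟨x, hx, rfl⟩ e
    rw [← CharTwo.add_eq_zero, arcSum_flip_add_sub_one hlt hinj, hx]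
    rfl

theorem range_funLeft_quotMk_eq_map_arcSum [NeZero n] {τ : ZMod (2 * n) → ZMod (2 * n)}
    (hlt : ∀ i, (f i).1.val < (f i).2.val) (hinj : Function.Injective (endpoint f))
    (hτinv : Function.Involutive τ) (hτ : ∀ i, τ (f i).1 = (f i).2) :
    LinearMap.range (LinearMap.funLeft (ZMod 2) (ZMod 2) (Quot.mk fun p q => τ (p + 1) = q)) =
      (LinearMap.ker ((linkingMatrix f).mulVecLin ∘ₗ LinearMap.fst _ _ _)).map (arcSum f) := by
  ext t
  simp only [LinearMap.mem_range_funLeft_quotMk_iff, forall_eq', Submodule.mem_map,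
    LinearMap.mem_ker, LinearMap.coe_comp, Function.comp_apply, LinearMap.fst_apply,
    Matrix.mulVecLin_apply]
  exact forall_eq_tau_add_one_iff_exists_arcSum hlt hinj hτinv hτ t

theorem card_quot_add_rank_linkingMatrix [NeZero n] {τ : ZMod (2 * n) → ZMod (2 * n)}
    (hlt : ∀ i, (f i).1.val < (f i).2.val) (hinj : Function.Injective (endpoint f))
    (hτinv : Function.Involutive τ) (hτ : ∀ i, τ (f i).1 = (f i).2) :
    Nat.card (Quot fun p q : ZMod (2 * n) => τ (p + 1) = q) + (linkingMatrix f).rank =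
      n + 1 := by
  rw [← LinearMap.finrank_range_funLeft_quotMk (K := ZMod 2),
    range_funLeft_quotMk_eq_map_arcSum hlt hinj hτinv hτ,
    ← (Submodule.equivMapOfInjective _ (arcSum_injective hlt hinj) _).finrank_eq,
    (linkingMatrix f).finrank_ker_mulVecLin_comp_fst_add_rank, Fintype.card_fin]

end ChordDiagram

/-- Components of `m(D)` are orbits of the map `p ↦ τ(p+1)` on the circle `ZMod (2n)`, where `τ`
is the involution exchanging the endpoints of each chord. -/
theorem components_eq_corank_add_one (n : ℕ) (hn : 0 < n)
    (f : Fin n → ZMod (2 * n) × ZMod (2 * n))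
    (hlt : ∀ i, (f i).1.val < (f i).2.val)
    (hinj : Function.Injective (fun p : Fin n × Bool => cond p.2 (f p.1).2 (f p.1).1))
    (τ : ZMod (2 * n) → ZMod (2 * n)) (hτinv : Function.Involutive τ)
    (hτ : ∀ i, τ (f i).1 = (f i).2) :
    Nat.card (Quot (fun p q : ZMod (2 * n) => τ (p + 1) = q)) =
      corankM (Matrix.of (fun i j : Fin n => if linked f i j then (1 : ZMod 2) else 0)) + 1 := by
  have : NeZero n := ⟨hn.ne'⟩
  have hcard := ChordDiagram.card_quot_add_rank_linkingMatrix hlt hinj hτinv hτ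
  have hrank := (ChordDiagram.linkingMatrix f).rank_le_card_width
  change _ = Fintype.card (Fin n) - (ChordDiagram.linkingMatrix f).rank + 1
  rw [Fintype.card_fin] at hrank ⊢
  omega
end
end
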